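/- arXiv:1505.05055 — 2 statements merged into one kernel-verified Lean document; each statement's English description precedes it below -/
import Mathlib

section
/- In a uniform level-L refinement of the type-0 root triangle, each level-L subtriangle of type 1 is a face-neighbor of a level-L subtriangle of type 0 that comes strictly later in the TM order. -/
/-- Points of the plane. -/
abbrev TMV : Type := Fin 2 → ℝ

/-- Midpoint of two points of the plane. -/
noncomputable def tmMid (a b : TMV) : TMV := (1 / 2 : ℝ) • (a + b)

/-- Bey's refinement: the four children of a triangle `[x 0, x 1, x 2]`. -/
noncomputable def beyChild (x : Fin 3 → TMV) : Fin 4 → Fin 3 → TMV :=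
  ![![x 0, tmMid (x 0) (x 1), tmMid (x 0) (x 2)],
    ![tmMid (x 0) (x 1), x 1, tmMid (x 1) (x 2)],
    ![tmMid (x 0) (x 2), tmMid (x 1) (x 2), x 2],
    ![tmMid (x 0) (x 1), tmMid (x 0) (x 2), tmMid (x 1) (x 2)]]

/-- The vertices of the subtriangle of the root `x` reached by the successive
child choices recorded in the list `p`. -/
noncomputable def tmVerts (x : Fin 3 → TMV) : List (Fin 4) → Fin 3 → TMV
  | [] => x
  | i :: p => tmVerts (beyChild x i) p

/-- The type of the subtriangle reached by path `p` from a root of type `τ`: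
children `T_0, T_1, T_2` inherit the parent's type, `T_3` has the opposite type. -/
def tmType (τ : Fin 2) : List (Fin 4) → Fin 2
  | [] => τ
  | i :: p => tmType (if i = 3 then 1 - τ else τ) p

/-- The position of Bey child `i` in the TM traversal order of the children of a
parent of type `b`: order `T_0, T_1, T_3, T_2` for type 0 and `T_0, T_3, T_1, T_2`
for type 1. -/
def tmChildRank (b : Fin 2) : Fin 4 → Fin 4 :=
  if b = 0 then ![0, 1, 3, 2] else ![0, 2, 3, 1]

/-- The TM index of the level-`p.length` subtriangle given by path `p` from a root
of type `τ`, among all subtriangles of that level. -/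
def tmIndex (τ : Fin 2) : List (Fin 4) → ℕ
  | [] => 0
  | i :: p => (tmChildRank τ i : ℕ) * 4 ^ p.length + tmIndex (if i = 3 then 1 - τ else τ) p

/-- The closed triangle spanned by the three vertices. -/
def triSet (x : Fin 3 → TMV) : Set TMV := convexHull ℝ {x 0, x 1, x 2}

/-- `e` is a complete edge of the triangle with vertices `x`. -/
def triIsEdge (x : Fin 3 → TMV) (e : Set TMV) : Prop :=
  ∃ i j : Fin 3, i ≠ j ∧ e = segment ℝ (x i) (x j)

/-- Two triangles are face-neighbors if their intersection is a complete edge of both. -/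
def triFaceNbr (x y : Fin 3 → TMV) : Prop :=
  ∃ e, triIsEdge x e ∧ triIsEdge y e ∧ triSet x ∩ triSet y = e

/-- A set `S` of subtriangle paths (with root vertices `x0`) is face-connected. -/
def triFaceConnected (x0 : Fin 3 → TMV) (S : Set (List (Fin 4))) : Prop :=
  ∀ p ∈ S, ∀ q ∈ S,
    Relation.ReflTransGen
      (fun a b => a ∈ S ∧ b ∈ S ∧ triFaceNbr (tmVerts x0 a) (tmVerts x0 b)) p q

/-- `S` has at most `n` face-connected components. -/
def triCompBound (x0 : Fin 3 → TMV) (S : Set (List (Fin 4))) (n : ℕ) : Prop :=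
  ∃ f : Fin n → Set (List (Fin 4)), S = ⋃ i, f i ∧ ∀ i, triFaceConnected x0 (f i)

/-- `S` is a contiguous segment of the TM curve through the uniform level-`L`
refinement of a root of type `τ`: a set of level-`L` paths forming an interval
in the TM order. -/
def tmSegment (τ : Fin 2) (L : ℕ) (S : Set (List (Fin 4))) : Prop :=
  (∀ p ∈ S, p.length = L) ∧
  ∀ p q r : List (Fin 4), p.length = L → q.length = L → r.length = L →
    p ∈ S → r ∈ S → tmIndex τ p ≤ tmIndex τ q → tmIndex τ q ≤ tmIndex τ r → q ∈ S

/-!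
Since the root has type 0, a path `p` of type 1 contains a `3`; split `p = r ++ i :: t` at its
last child `i ∈ {0, 3}`, so that `t` uses only children `1, 2`. Inside the triangle reached by `r`,
`T_0` and `T_3` share an edge, as do `T_3` and `T_2`, and in both TM orders `T_0` precedes `T_3`
and `T_3` precedes `T_2`. Exchanging `i` for its partner `i'` flips the type. The subtriangle of
`T_i` reached by `t` has an edge on the shared edge, and the subtriangle of `T_{i'}` reached by the
mirrored path (children `1, 2` replaced by `0, 1`) lies across it: an affine functional vanishing on
the shared edge separates the two at every level. That gives the later neighbor of type 0.
-/

lemma convexHull_inter_convexHull_eq_segment {E : Type*} [AddCommGroup E] [Module ℝ E]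
    {a b c d : E} (f : E →ᵃ[ℝ] ℝ) (ha : f a = 0) (hb : f b = 0) (hc : f c < 0) (hd : 0 ≤ f d) :
    convexHull ℝ {c, a, b} ∩ convexHull ℝ {a, b, d} = segment ℝ a b := by
  have hab : segment ℝ a b ⊆ {w | f w = 0} :=
    (convex_singleton (0 : ℝ)).affine_preimage f |>.segment_subset ha hb
  refine subset_antisymm ?_ fun z hz ↦
    ⟨segment_subset_convexHull (by simp) (by simp) hz,
      segment_subset_convexHull (by simp) (by simp) hz⟩
  rintro z ⟨hzc, hzd⟩
  have hfz : f z = 0 := by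
    refine le_antisymm (convexHull_min ?_ ((convex_Iic 0).affine_preimage f) hzc)
      (convexHull_min ?_ ((convex_Ici 0).affine_preimage f) hzd)
    · rintro w (rfl | rfl | rfl) <;> simp [ha, hb, hc.le]
    · rintro w (rfl | rfl | rfl) <;> simp [ha, hb, hd]
  rw [convexHull_insert (by simp), convexHull_pair, mem_convexJoin] at hzc
  obtain ⟨_, rfl, w, hw, s, t, hs, ht, hst, rfl⟩ := hzc
  have hs0 : s = 0 := by
    rw [Convex.combo_affine_apply hst, hab hw] at hfz
    simpa [hc.ne] using hfz
  obtain rfl : t = 1 := by linarith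
  simpa [hs0] using hw

lemma tmMid_eq_midpoint (a b : TMV) : tmMid a b = midpoint ℝ a b := by
  rw [tmMid, midpoint_eq_smul_add, invOf_eq_inv, one_div]

lemma AffineMap.map_tmMid (f : TMV →ᵃ[ℝ] ℝ) (a b : TMV) : f (tmMid a b) = (f a + f b) / 2 := by
  rw [tmMid_eq_midpoint, f.map_midpoint, midpoint_eq_smul_add, smul_eq_mul, invOf_eq_inv]
  ring

lemma beyChild_castSucc_eq_homothety_comp (x : Fin 3 → TMV) (k : Fin 3) :
    beyChild x k.castSucc = AffineMap.homothety (x k) (1 / 2 : ℝ) ∘ x := by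
  funext j
  fin_cases k <;> fin_cases j <;> simp [beyChild, tmMid, AffineMap.homothety_apply] <;> module

lemma beyChild_three_eq_homothety_comp (x : Fin 3 → TMV) :
    beyChild x 3 =
      AffineMap.homothety ((1 / 3 : ℝ) • (x 0 + x 1 + x 2)) (-1 / 2 : ℝ) ∘ x ∘ Equiv.swap 0 2 := by
  funext j
  fin_cases j <;>
    simp [beyChild, tmMid, AffineMap.homothety_apply, Equiv.swap_apply_of_ne_of_ne] <;> module

lemma affineIndependent_beyChild {x : Fin 3 → TMV} (hx : AffineIndependent ℝ x) (k : Fin 4) :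
    AffineIndependent ℝ (beyChild x k) := by
  obtain ⟨k, rfl⟩ | rfl := Fin.eq_castSucc_or_eq_last k
  · rw [beyChild_castSucc_eq_homothety_comp]
    exact hx.map' _ (AffineMap.homothety_injective _ (by norm_num))
  · change AffineIndependent ℝ (beyChild x 3)
    rw [beyChild_three_eq_homothety_comp]
    exact (hx.comp_embedding (Equiv.swap 0 2).toEmbedding).map' _
      (AffineMap.homothety_injective _ (by norm_num))

lemma AffineIndependent.exists_barycentricCoord {k V ι : Type*} [Field k] [AddCommGroup V]
    [Module k V] [FiniteDimensional k V] [Fintype ι] [DecidableEq ι] {x : ι → V}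
    (hx : AffineIndependent k x) (hcard : Fintype.card ι = Module.finrank k V + 1) :
    ∃ c : ι → V →ᵃ[k] k, ∀ i j, c i (x j) = if i = j then 1 else 0 := by
  let b : AffineBasis ι k V :=
    ⟨x, hx, hx.affineSpan_eq_top_iff_card_eq_finrank_add_one.mpr hcard⟩
  refine ⟨b.coord, fun i j ↦ ?_⟩
  split_ifs with h
  · subst h; exact b.coord_apply_eq i
  · exact b.coord_apply_ne h

def OppositeAcrossEdge (X Y : Fin 3 → TMV) : Prop :=
  Y 0 = X 1 ∧ Y 1 = X 2 ∧
    ∃ f : TMV →ᵃ[ℝ] ℝ, f (X 1) = 0 ∧ f (X 2) = 0 ∧ f (X 0) < 0 ∧ 0 < f (Y 2)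

namespace OppositeAcrossEdge

variable {X Y : Fin 3 → TMV}

lemma triFaceNbr (h : OppositeAcrossEdge X Y) : triFaceNbr X Y := by
  obtain ⟨h0, h1, f, f1, f2, f0, fy⟩ := h
  refine ⟨segment ℝ (X 1) (X 2), ⟨1, 2, by decide, rfl⟩, ⟨0, 1, by decide, by rw [h0, h1]⟩, ?_⟩
  rw [triSet, triSet, h0, h1]
  exact convexHull_inter_convexHull_eq_segment f f1 f2 f0 fy.le

lemma beyChild_one_zero (h : OppositeAcrossEdge X Y) :
    OppositeAcrossEdge (beyChild X 1) (beyChild Y 0) := by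
  obtain ⟨h0, h1, f, f1, f2, f0, fy⟩ := h
  refine ⟨h0, by simp [beyChild, h0, h1], f, ?_, ?_, ?_, ?_⟩ <;>
    simp only [beyChild, Matrix.cons_val, f.map_tmMid, h0] <;> linarith

lemma beyChild_two_one (h : OppositeAcrossEdge X Y) :
    OppositeAcrossEdge (beyChild X 2) (beyChild Y 1) := by
  obtain ⟨h0, h1, f, f1, f2, f0, fy⟩ := h
  refine ⟨by simp [beyChild, h0, h1], h1, f, ?_, ?_, ?_, ?_⟩ <;>
    simp only [beyChild, Matrix.cons_val, f.map_tmMid, h1] <;> linarith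

-- Children `1, 2` of `X` are those along the edge `X 1 X 2`, children `0, 1` of `Y` those along
-- the same edge `Y 0 Y 1`.
lemma tmVerts_map_pred (h : OppositeAcrossEdge X Y) {t : List (Fin 4)}
    (ht : ∀ j ∈ t, j = 1 ∨ j = 2) :
    OppositeAcrossEdge (tmVerts X t) (tmVerts Y (t.map (· - 1))) := by
  induction t generalizing X Y with
  | nil => exact h
  | cons j t ih =>
    have ht' : ∀ j ∈ t, j = 1 ∨ j = 2 := fun j hj ↦ ht j (List.mem_cons_of_mem _ hj)
    rcases ht j List.mem_cons_self with rfl | rfl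
    · exact ih h.beyChild_one_zero ht'
    · exact ih h.beyChild_two_one ht'

end OppositeAcrossEdge

lemma oppositeAcrossEdge_beyChild_zero_three {x : Fin 3 → TMV}
    (hx : AffineIndependent ℝ x) : OppositeAcrossEdge (beyChild x 0) (beyChild x 3) := by
  obtain ⟨c, hc⟩ := hx.exists_barycentricCoord (by simp)
  refine ⟨rfl, rfl, c 1 + c 2 - c 0, ?_⟩
  simp [beyChild, AffineMap.map_tmMid, hc]

lemma oppositeAcrossEdge_beyChild_three_two {x : Fin 3 → TMV}
    (hx : AffineIndependent ℝ x) : OppositeAcrossEdge (beyChild x 3) (beyChild x 2) := by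
  obtain ⟨c, hc⟩ := hx.exists_barycentricCoord (by simp)
  refine ⟨rfl, rfl, c 2 - c 0 - c 1, ?_⟩
  simp [beyChild, AffineMap.map_tmMid, hc]

lemma tmType_eq_of_forall_ne_three (τ : Fin 2) {t : List (Fin 4)} (ht : ∀ j ∈ t, j ≠ 3) :
    tmType τ t = τ := by
  induction t with
  | nil => rfl
  | cons j t ih =>
    simp only [List.mem_cons, forall_eq_or_imp] at ht
    simp [tmType, ht.1, ih ht.2]

lemma tmIndex_lt_pow (τ : Fin 2) (p : List (Fin 4)) : tmIndex τ p < 4 ^ p.length := by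
  induction p generalizing τ with
  | nil => simp [tmIndex]
  | cons i p ih =>
    have hi : (tmChildRank τ i : ℕ) + 1 ≤ 4 := (tmChildRank τ i).isLt
    have := ih (if i = 3 then 1 - τ else τ)
    rw [tmIndex, List.length_cons, pow_succ]
    nlinarith

lemma tmIndex_cons_lt_cons {τ : Fin 2} {i i' : Fin 4} (h : tmChildRank τ i < tmChildRank τ i')
    {a b : List (Fin 4)} (hab : a.length = b.length) :
    tmIndex τ (i :: a) < tmIndex τ (i' :: b) := by
  have ha := tmIndex_lt_pow (if i = 3 then 1 - τ else τ) a
  have hr : ((tmChildRank τ i : ℕ) + 1) * 4 ^ a.length ≤ tmChildRank τ i' * 4 ^ a.length :=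
    Nat.mul_le_mul_right _ h
  rw [tmIndex, tmIndex, ← hab]
  nlinarith

def IsLaterOppositeTypeNbr (x : Fin 3 → TMV) (τ : Fin 2) (p q : List (Fin 4)) : Prop :=
  q.length = p.length ∧ tmType τ q ≠ tmType τ p ∧ tmIndex τ p < tmIndex τ q ∧
    triFaceNbr (tmVerts x p) (tmVerts x q)

lemma IsLaterOppositeTypeNbr.cons {x : Fin 3 → TMV} {τ : Fin 2} {i : Fin 4} {p q : List (Fin 4)}
    (h : IsLaterOppositeTypeNbr (beyChild x i) (if i = 3 then 1 - τ else τ) p q) :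
    IsLaterOppositeTypeNbr x τ (i :: p) (i :: q) := by
  obtain ⟨hlen, htype, hindex, hnbr⟩ := h
  refine ⟨by simp [hlen], htype, ?_, hnbr⟩
  simp only [tmIndex, hlen]
  omega

lemma isLaterOppositeTypeNbr_of_oppositeAcrossEdge {x : Fin 3 → TMV} {τ : Fin 2} {i i' : Fin 4}
    (hedge : OppositeAcrossEdge (beyChild x i) (beyChild x i'))
    (hrank : tmChildRank τ i < tmChildRank τ i')
    (hflip : (if i = 3 then 1 - τ else τ) ≠ (if i' = 3 then 1 - τ else τ))
    {t : List (Fin 4)} (ht : ∀ j ∈ t, j = 1 ∨ j = 2) :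
    IsLaterOppositeTypeNbr x τ (i :: t) (i' :: t.map (· - 1)) := by
  have ht3 : ∀ j ∈ t, j ≠ 3 := fun j hj ↦ by rcases ht j hj with rfl | rfl <;> decide
  have ht3' : ∀ j ∈ t.map (· - 1), j ≠ 3 := by
    simp only [List.mem_map]
    rintro _ ⟨j, hj, rfl⟩
    rcases ht j hj with rfl | rfl <;> decide
  refine ⟨by simp, ?_, tmIndex_cons_lt_cons hrank (by simp), (hedge.tmVerts_map_pred ht).triFaceNbr⟩
  simp only [tmType, tmType_eq_of_forall_ne_three _ ht3, tmType_eq_of_forall_ne_three _ ht3']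
  exact hflip.symm

lemma exists_isLaterOppositeTypeNbr_of_forall_tail {x : Fin 3 → TMV} (hx : AffineIndependent ℝ x)
    (τ : Fin 2) {i : Fin 4} (hi : i = 0 ∨ i = 3) {t : List (Fin 4)} (ht : ∀ j ∈ t, j = 1 ∨ j = 2) :
    ∃ q, IsLaterOppositeTypeNbr x τ (i :: t) q := by
  rcases hi with rfl | rfl
  · exact ⟨_, isLaterOppositeTypeNbr_of_oppositeAcrossEdge
      (oppositeAcrossEdge_beyChild_zero_three hx)
      (by fin_cases τ <;> decide) (by fin_cases τ <;> decide) ht⟩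
  · exact ⟨_, isLaterOppositeTypeNbr_of_oppositeAcrossEdge
      (oppositeAcrossEdge_beyChild_three_two hx)
      (by fin_cases τ <;> decide) (by fin_cases τ <;> decide) ht⟩

lemma exists_isLaterOppositeTypeNbr {x : Fin 3 → TMV} (hx : AffineIndependent ℝ x) (τ : Fin 2)
    {p : List (Fin 4)} (hp : ∃ j ∈ p, j = 0 ∨ j = 3) :
    ∃ q, IsLaterOppositeTypeNbr x τ p q := by
  induction p generalizing x τ with
  | nil => simp at hp
  | cons i p ih =>
    by_cases hp' : ∃ j ∈ p, j = 0 ∨ j = 3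
    · obtain ⟨q, hq⟩ := ih (affineIndependent_beyChild hx i) (if i = 3 then 1 - τ else τ) hp'
      exact ⟨i :: q, hq.cons⟩
    · simp only [List.mem_cons, exists_eq_or_imp] at hp
      refine exists_isLaterOppositeTypeNbr_of_forall_tail hx τ (hp.resolve_right hp') fun j hj ↦ ?_
      have : ¬(j = 0 ∨ j = 3) := fun h ↦ hp' ⟨j, hj, h⟩
      omega

/-- In a uniform level-`L` refinement of the type-0 root triangle, each level-`L`
subtriangle of type 1 is a face-neighbor of a level-`L` subtriangle of type 0 that
comes strictly later in the TM order. -/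
theorem tm_type1_has_later_type0_neighbor (x0 : Fin 3 → TMV)
    (hx0 : AffineIndependent ℝ x0) (L : ℕ)
    (p : List (Fin 4)) (hp : p.length = L) (hty : tmType 0 p = 1) :
    ∃ q : List (Fin 4), q.length = L ∧ tmType 0 q = 0 ∧
      tmIndex 0 p < tmIndex 0 q ∧ triFaceNbr (tmVerts x0 p) (tmVerts x0 q) := by
  have hp03 : ∃ j ∈ p, j = 0 ∨ j = 3 := by
    by_contra! h
    have := tmType_eq_of_forall_ne_three 0 fun j hj ↦ (h j hj).2
    simp [this] at hty
  obtain ⟨q, hlen, htype, hindex, hnbr⟩ := exists_isLaterOppositeTypeNbr hx0 0 hp03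
  refine ⟨q, hlen.trans hp, ?_, hindex, hnbr⟩
  rw [hty] at htype
  omega
end

section
/- In a uniform level-L refinement of the type-0 root triangle, each level-L subtriangle of type 0 that is a descendant of the level-1 child T_3 (the type-1 child of the root) is a face-neighbor of a level-L subtriangle of type 1 that comes strictly later in the TM order. -/
/-! Induct on the last refinement step of `p`. If `p` is the child `T_0` or `T_1` of a type-0
parent, or `T_3` of a type-1 parent, its sibling `T_3`, resp. `T_1`, is a later type-1 triangle.
If `p` is `T_2`, the last child of its type-0 parent `s`, the parent has a later type-1 neighbor
`q'` by induction, and the corner child of `q'` at the common vertex is a later type-1 neighbor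
of `p`. The induction terminates because a descendant of `T_3` is not reached by `T_2`-steps
alone.
The invariant that makes the last case work: the neighbor is the image of `p` under the point
reflection in the midpoint of an edge of `p` through its vertex `x_2`. The corner child of the
parent at `x_2` and the corresponding corner child of `q'` are related in the same way, since
the homothety producing both commutes with point reflections. -/

open AffineMap AffineEquiv

theorem AffineMap.map_pointReflection {V P V' P' : Type*} [AddCommGroup V] [Module ℝ V]
    [AddTorsor V P] [AddCommGroup V'] [Module ℝ V'] [AddTorsor V' P'] (f : P →ᵃ[ℝ] P')
    (m v : P) : f (pointReflection ℝ m v) = pointReflection ℝ (f m) (f v) := by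
  rw [eq_comm, ← midpoint_eq_iff, ← f.map_midpoint, AffineEquiv.midpoint_pointReflection_right]

section Triangle

variable {E : Type*} [AddCommGroup E] [Module ℝ E]

lemma mem_segment_of_mem_convexHull_of_apply_nonpos (f : E →ᵃ[ℝ] ℝ) {a b c v : E}
    (ha : f a = 0) (hb : f b = 0) (hc : 0 < f c) (hv : v ∈ convexHull ℝ {c, a, b})
    (hfv : f v ≤ 0) : v ∈ segment ℝ a b := by
  rw [convexHull_insert (Set.insert_nonempty a {b}), convexHull_pair,
    convexJoin_singleton_left, Set.mem_iUnion₂] at hv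
  obtain ⟨y, ⟨γ, δ, hγ, hδ, hγδ, rfl⟩, α, β, hα, -, hαβ, rfl⟩ := hv
  have hfy : f (γ • a + δ • b) = 0 := by
    rw [Convex.combo_affine_apply hγδ, ha, hb]
    simp
  rw [Convex.combo_affine_apply hαβ, hfy, smul_eq_mul, smul_zero, add_zero] at hfv
  obtain rfl : α = 0 := le_antisymm (nonpos_of_mul_nonpos_left hfv hc) hα
  obtain rfl : β = 1 := by linarith
  simpa using ⟨γ, δ, hγ, hδ, hγδ, rfl⟩

/-- The third barycentric coordinate is nonnegative on the triangle and changes sign under the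
reflection, so the two triangles can only meet where it vanishes. -/
lemma convexHull_inter_image_pointReflection [FiniteDimensional ℝ E]
    (hE : Module.finrank ℝ E = 2) {x : Fin 3 → E} (hx : AffineIndependent ℝ x) {i j : Fin 3}
    (hij : i ≠ j) :
    convexHull ℝ (Set.range x) ∩
        pointReflection ℝ (midpoint ℝ (x i) (x j)) '' convexHull ℝ (Set.range x) =
      segment ℝ (x i) (x j) := by
  obtain ⟨k, hki, hkj⟩ : ∃ k, k ≠ i ∧ k ≠ j := by revert i j; decide
  have hrange : Set.range x = {x k, x i, x j} := by
    rw [← Set.image_univ, show (Set.univ : Set (Fin 3)) = {k, i, j} by ext l; simp; omega]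
    simp only [Set.image_insert_eq, Set.image_singleton]
  let B : AffineBasis (Fin 3) ℝ E :=
    ⟨x, hx, hx.affineSpan_eq_top_iff_card_eq_finrank_add_one.mpr (by simp [hE])⟩
  set f := B.coord k
  have hfi : f (x i) = 0 := B.coord_apply_ne hki
  have hfj : f (x j) = 0 := B.coord_apply_ne hkj
  have hfk : f (x k) = 1 := B.coord_apply_eq k
  have hf_reflect (v : E) : f (pointReflection ℝ (midpoint ℝ (x i) (x j)) v) = -f v := by
    rw [f.map_pointReflection, f.map_midpoint, hfi, hfj]
    simp [Equiv.pointReflection_apply]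
  have hf_nonneg (v : E) (hv : v ∈ convexHull ℝ (Set.range x)) : 0 ≤ f v :=
    (B.convexHull_eq_nonneg_coord.subset hv :) k
  apply subset_antisymm
  · rintro v ⟨hv, w, hw, rfl⟩
    refine mem_segment_of_mem_convexHull_of_apply_nonpos f hfi hfj (by rw [hfk]; exact one_pos)
      (hrange ▸ hv) ?_
    rw [hf_reflect]
    linarith [hf_nonneg w hw]
  · refine Set.subset_inter (segment_subset_convexHull ⟨i, rfl⟩ ⟨j, rfl⟩) ?_
    rw [← AffineEquiv.coe_toAffineMap, AffineMap.image_convexHull]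
    exact segment_subset_convexHull ⟨x j, ⟨j, rfl⟩, by simp⟩ ⟨x i, ⟨i, rfl⟩, by simp⟩

end Triangle

lemma triSet_eq_convexHull_range (x : Fin 3 → TMV) : triSet x = convexHull ℝ (Set.range x) := by
  rw [triSet, Fin.range_fin_succ, Fin.range_fin_succ, Fin.range_fin_succ]
  simp [Fin.tail]

def IsEdgeReflection (x : Fin 3 → TMV) (u : Fin 3) (y : Fin 3 → TMV) : Prop :=
  Set.range y = pointReflection ℝ (midpoint ℝ (x u) (x 2)) '' Set.range x

lemma isEdgeReflection_of_eq_comp {x y : Fin 3 → TMV} {u : Fin 3}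
    (h : y = pointReflection ℝ (midpoint ℝ (x u) (x 2)) ∘ x ∘ Fin.rev) :
    IsEdgeReflection x u y := by
  rw [IsEdgeReflection, h, Set.range_comp, Fin.rev_surjective.range_comp]

lemma IsEdgeReflection.triFaceNbr {x y : Fin 3 → TMV} {u : Fin 3} (hx : AffineIndependent ℝ x)
    (hu : u ≠ 2) (h : IsEdgeReflection x u y) : triFaceNbr x y := by
  have hy : triSet y = pointReflection ℝ (midpoint ℝ (x u) (x 2)) '' triSet x := by
    rw [triSet_eq_convexHull_range, triSet_eq_convexHull_range, h, ← coe_toAffineMap,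
      AffineMap.image_convexHull]
  obtain ⟨i, hi⟩ : x u ∈ Set.range y := by
    rw [h]; exact ⟨x 2, ⟨2, rfl⟩, pointReflection_midpoint_right _ _⟩
  obtain ⟨j, hj⟩ : x 2 ∈ Set.range y := by
    rw [h]; exact ⟨x u, ⟨u, rfl⟩, pointReflection_midpoint_left _ _⟩
  refine ⟨segment ℝ (x u) (x 2), ⟨u, 2, hu, rfl⟩, ⟨i, j, ?_, by rw [hi, hj]⟩, ?_⟩
  · rintro rfl
    exact hx.injective.ne hu (hi.symm.trans hj)
  · rw [hy, triSet_eq_convexHull_range]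
    exact convexHull_inter_image_pointReflection (by simp) hx hu

lemma beyChild_castSucc (x : Fin 3 → TMV) (j : Fin 3) :
    beyChild x j.castSucc = homothety (x j) (1 / 2 : ℝ) ∘ x := by
  funext i
  fin_cases j <;> fin_cases i <;> simp [beyChild, tmMid, homothety_apply] <;> module

lemma beyChild_three_eq_reflection_beyChild_zero (x : Fin 3 → TMV) :
    beyChild x 3 = pointReflection ℝ (midpoint ℝ (beyChild x 0 1) (beyChild x 0 2)) ∘
      beyChild x 0 ∘ Fin.rev := by
  funext i
  fin_cases i <;>
    simp [beyChild, tmMid, Equiv.pointReflection_apply, midpoint_eq_smul_add, Fin.rev] <;> module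

lemma beyChild_three_eq_reflection_beyChild_one (x : Fin 3 → TMV) :
    beyChild x 3 = pointReflection ℝ (midpoint ℝ (beyChild x 1 0) (beyChild x 1 2)) ∘
      beyChild x 1 ∘ Fin.rev := by
  funext i
  fin_cases i <;>
    simp [beyChild, tmMid, Equiv.pointReflection_apply, midpoint_eq_smul_add, Fin.rev] <;> module

lemma beyChild_one_eq_reflection_beyChild_three (x : Fin 3 → TMV) :
    beyChild x 1 = pointReflection ℝ (midpoint ℝ (beyChild x 3 0) (beyChild x 3 2)) ∘
      beyChild x 3 ∘ Fin.rev := by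
  funext i
  fin_cases i <;>
    simp [beyChild, tmMid, Equiv.pointReflection_apply, midpoint_eq_smul_add, Fin.rev] <;> module

lemma IsEdgeReflection.exists_beyChild {x y : Fin 3 → TMV} {u : Fin 3}
    (h : IsEdgeReflection x u y) :
    ∃ j : Fin 3, IsEdgeReflection (beyChild x 2) u (beyChild y j.castSucc) := by
  obtain ⟨j, hj⟩ : x 2 ∈ Set.range y := by
    rw [h]; exact ⟨x u, ⟨u, rfl⟩, pointReflection_midpoint_left _ _⟩
  refine ⟨j, ?_⟩
  have hx2 : beyChild x 2 = homothety (x 2) (1 / 2 : ℝ) ∘ x := beyChild_castSucc x 2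
  rw [IsEdgeReflection, beyChild_castSucc, hj, hx2, Set.range_comp, Set.range_comp, h,
    Set.image_image, Set.image_image]
  congr 1
  funext v
  simp only [Function.comp_apply, AffineMap.map_pointReflection, AffineMap.map_midpoint]

lemma AffineIndependent.beyChild {x : Fin 3 → TMV} (hx : AffineIndependent ℝ x) (c : Fin 4) :
    AffineIndependent ℝ (beyChild x c) := by
  have corner (j : Fin 3) : AffineIndependent ℝ (_root_.beyChild x j.castSucc) := by
    rw [beyChild_castSucc]
    exact hx.map' _ fun a b hab => by simpa [homothety_apply] using hab
  induction c using Fin.lastCases with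
  | last =>
    rw [show Fin.last 3 = 3 from rfl, beyChild_three_eq_reflection_beyChild_zero,
      AffineEquiv.affineIndependent_iff]
    exact (affineIndependent_equiv Fin.revPerm).mpr (corner 0)
  | cast j => exact corner j

lemma AffineIndependent.tmVerts {x : Fin 3 → TMV} (hx : AffineIndependent ℝ x)
    (p : List (Fin 4)) : AffineIndependent ℝ (tmVerts x p) := by
  induction p generalizing x with
  | nil => exact hx
  | cons c p ih => exact ih (hx.beyChild c)

lemma tmVerts_append_singleton (x : Fin 3 → TMV) (s : List (Fin 4)) (c : Fin 4) :
    tmVerts x (s ++ [c]) = beyChild (tmVerts x s) c := by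
  induction s generalizing x with
  | nil => rfl
  | cons a s ih => exact ih (beyChild x a)

lemma tmType_append_singleton (τ : Fin 2) (s : List (Fin 4)) (c : Fin 4) :
    tmType τ (s ++ [c]) = if c = 3 then 1 - tmType τ s else tmType τ s := by
  induction s generalizing τ with
  | nil => rfl
  | cons a s ih => exact ih _

lemma tmIndex_append_singleton (τ : Fin 2) (s : List (Fin 4)) (c : Fin 4) :
    tmIndex τ (s ++ [c]) = 4 * tmIndex τ s + tmChildRank (tmType τ s) c := by
  induction s generalizing τ with
  | nil => simp [tmIndex, tmType]
  | cons a s ih =>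
    simp only [List.cons_append, tmIndex, tmType, ih, List.length_append, List.length_singleton]
    ring

lemma exists_later_type_one_isEdgeReflection (x : Fin 3 → TMV) (τ : Fin 2) (p : List (Fin 4))
    (hp : ∃ c ∈ p, c ≠ 2) (hty : tmType τ p = 0) :
    ∃ q : List (Fin 4), q.length = p.length ∧ tmType τ q = 1 ∧ tmIndex τ p < tmIndex τ q ∧
      ∃ u ≠ 2, IsEdgeReflection (tmVerts x p) u (tmVerts x q) := by
  induction p using List.reverseRecOn with
  | nil => simp at hp
  | append_singleton s c ih =>
    rw [tmType_append_singleton] at hty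
    simp only [tmVerts_append_singleton, tmIndex_append_singleton]
    fin_cases c
    · obtain hs : tmType τ s = 0 := by simpa using hty
      refine ⟨s ++ [3], by simp, by simp [tmType_append_singleton, hs], ?_, 1, by decide, ?_⟩
      · rw [tmIndex_append_singleton, hs]; exact Nat.add_lt_add_left (by decide) _
      · rw [tmVerts_append_singleton]
        exact isEdgeReflection_of_eq_comp (beyChild_three_eq_reflection_beyChild_zero _)
    · obtain hs : tmType τ s = 0 := by simpa using hty
      refine ⟨s ++ [3], by simp, by simp [tmType_append_singleton, hs], ?_, 0, by decide, ?_⟩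
      · rw [tmIndex_append_singleton, hs]; exact Nat.add_lt_add_left (by decide) _
      · rw [tmVerts_append_singleton]
        exact isEdgeReflection_of_eq_comp (beyChild_three_eq_reflection_beyChild_one _)
    · obtain hs : tmType τ s = 0 := by simpa using hty
      obtain ⟨q, hlen, hqty, hidx, u, hu, hq⟩ := ih (by simpa using hp) hs
      obtain ⟨j, hj⟩ := hq.exists_beyChild
      refine ⟨q ++ [j.castSucc], by simp [hlen], ?_, ?_, u, hu, ?_⟩
      · have hj3 : j.castSucc ≠ 3 := (Fin.castSucc_lt_last j).ne
        rw [tmType_append_singleton, if_neg hj3, hqty]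
      · rw [tmIndex_append_singleton, hs]
        omega
      · rwa [tmVerts_append_singleton]
    · obtain hs : tmType τ s = 1 := by
        revert hty; generalize tmType τ s = b; revert b; decide
      refine ⟨s ++ [1], by simp, by simp [tmType_append_singleton, hs], ?_, 0, by decide, ?_⟩
      · rw [tmIndex_append_singleton, hs]; exact Nat.add_lt_add_left (by decide) _
      · rw [tmVerts_append_singleton]
        exact isEdgeReflection_of_eq_comp (beyChild_one_eq_reflection_beyChild_three _)

/-- In a uniform level-`L` refinement of the type-0 root triangle, each level-`L`
subtriangle of type 0 that descends from the level-1 child `T_3` of the root is a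
face-neighbor of a level-`L` subtriangle of type 1 that comes strictly later in the
TM order. -/
theorem tm_type0_in_T3_has_later_type1_neighbor (x0 : Fin 3 → TMV)
    (hx0 : AffineIndependent ℝ x0) (L : ℕ)
    (p : List (Fin 4)) (hp : p.length = L) (hty : tmType 0 p = 0)
    (hdesc : ∃ rest : List (Fin 4), p = 3 :: rest) :
    ∃ q : List (Fin 4), q.length = L ∧ tmType 0 q = 1 ∧
      tmIndex 0 p < tmIndex 0 q ∧ triFaceNbr (tmVerts x0 p) (tmVerts x0 q) := by
  obtain ⟨rest, rfl⟩ := hdesc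
  obtain ⟨q, hlen, hqty, hidx, u, hu, hq⟩ :=
    exists_later_type_one_isEdgeReflection x0 0 (3 :: rest) ⟨3, List.mem_cons_self, by decide⟩ hty
  exact ⟨q, hlen.trans hp, hqty, hidx, hq.triFaceNbr (hx0.tmVerts _) hu⟩
end
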